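/- For all integers i, j ≥ 1, (1 + √((i-1)(j-1)))/√(i·j) ≤ (1 + √(i·j))/√((1+i)(1+j)). -/
import Mathlib


theorem coherence_ratio_monotone (i j : ℕ) (hi : 1 ≤ i) (hj : 1 ≤ j) :
    (1 + Real.sqrt (((i : ℝ) - 1) * ((j : ℝ) - 1))) / Real.sqrt ((i : ℝ) * j) ≤
      (1 + Real.sqrt ((i : ℝ) * j)) / Real.sqrt ((1 + (i : ℝ)) * (1 + (j : ℝ))) := by
  have hi1 : (1:ℝ) ≤ (i:ℝ) := by exact_mod_cast hi
  have hj1 : (1:ℝ) ≤ (j:ℝ) := by exact_mod_cast hj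
  set m := Real.sqrt (((i : ℝ) - 1) * ((j : ℝ) - 1)) with hmdef
  set u := Real.sqrt ((i : ℝ) * j) with hudef
  have hQ : (0:ℝ) ≤ ((i : ℝ) - 1) * ((j : ℝ) - 1) :=
    mul_nonneg (by linarith) (by linarith)
  have hP : (0:ℝ) < (i : ℝ) * j := by nlinarith
  have hm : 0 ≤ m := Real.sqrt_nonneg _
  have hm2 : m ^ 2 = ((i : ℝ) - 1) * ((j : ℝ) - 1) := Real.sq_sqrt hQ
  have hu2 : u ^ 2 = (i : ℝ) * j := Real.sq_sqrt hP.le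
  have hu : 0 < u := Real.sqrt_pos.mpr hP
  -- AM-GM : m ≤ ((i-1)+(j-1))/2
  have h2m : m ≤ (((i:ℝ) - 1) + ((j:ℝ) - 1)) / 2 := by
    have h := Real.sqrt_le_sqrt (show ((i : ℝ) - 1) * ((j : ℝ) - 1) ≤
        ((((i:ℝ) - 1) + ((j:ℝ) - 1)) / 2) ^ 2 by nlinarith [sq_nonneg ((i:ℝ) - j)])
    rwa [Real.sqrt_sq (by linarith)] at h
  have hmu : m + 1 ≤ u := by
    rw [hudef, show (m:ℝ) + 1 = Real.sqrt ((m + 1) ^ 2) from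
      (Real.sqrt_sq (by linarith)).symm]
    apply Real.sqrt_le_sqrt
    nlinarith
  have hR : (1 + (i : ℝ)) * (1 + (j : ℝ)) = 2 * u ^ 2 - m ^ 2 + 2 := by
    rw [hu2, hm2]; ring
  have hRpos : (0:ℝ) < (1 + (i : ℝ)) * (1 + (j : ℝ)) := by nlinarith
  rw [div_le_div_iff₀ hu (Real.sqrt_pos.mpr hRpos)]
  have hL : (1 + m) * Real.sqrt ((1 + (i : ℝ)) * (1 + (j : ℝ))) =
      Real.sqrt ((1 + m) ^ 2 * ((1 + (i : ℝ)) * (1 + (j : ℝ)))) := by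
    rw [Real.sqrt_mul (sq_nonneg _), Real.sqrt_sq (by linarith)]
  have hRr : (1 + u) * u = Real.sqrt ((1 + u) ^ 2 * u ^ 2) := by
    rw [Real.sqrt_mul (sq_nonneg _), Real.sqrt_sq (by linarith), Real.sqrt_sq hu.le]
  rw [hL, hRr]
  apply Real.sqrt_le_sqrt
  rw [hR]
  nlinarith [sq_nonneg (u - m - 1), sq_nonneg (u + m), mul_nonneg hm (sub_nonneg.mpr hmu),
    mul_nonneg (mul_nonneg hm hm) (sub_nonneg.mpr hmu), sq_nonneg (u*m - 1),
    mul_nonneg (sub_nonneg.mpr hmu) (sub_nonneg.mpr hmu), hu.le,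
    mul_nonneg (mul_nonneg hu.le hu.le) (sub_nonneg.mpr hmu)]
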